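/- arXiv:2208.10949 — 4 statements merged into one kernel-verified Lean document; each statement's English description precedes it below -/
import Mathlib

section
/- Let g₁, g₂ : 2^T → [0,1] be monotone non-decreasing submodular functions. Then the disjunction h(S) = 1 − (1 − g₁(S))(1 − g₂(S)) is monotone non-decreasing and submodular. -/
/-!
Write `fᵢ = 1 - gᵢ`: these are non-negative, antitone and supermodular, and `h = 1 - f₁ f₂`.
The discrete product rule `Δₜ(f₁ f₂)(X) = f₁(X + t) Δₜf₂(X) + f₂(X) Δₜf₁(X)` shows that the
increments of `f₁ f₂` grow along `⊆`: each increment `Δₜfᵢ` is non-positive and grows, and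
its non-negative weight shrinks. Hence `f₁ f₂` is antitone and supermodular, i.e. `h` is monotone
and submodular.
-/

section SetFunction

variable {α R : Type*} [DecidableEq α] [CommRing R] [PartialOrder R] [IsOrderedRing R]

def Submodular (f : Finset α → R) : Prop :=
  ∀ (S S' : Finset α) (t : α), S ⊆ S' → t ∉ S' →
    f (insert t S') - f S' ≤ f (insert t S) - f S

def Supermodular (f : Finset α → R) : Prop :=
  ∀ (S S' : Finset α) (t : α), S ⊆ S' → t ∉ S' →
    f (insert t S) - f S ≤ f (insert t S') - f S'

theorem Submodular.const_sub {f : Finset α → R} (hf : Submodular f) (c : R) :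
    Supermodular fun S => c - f S := fun S S' t hS ht => by
  have := hf S S' t hS ht
  linear_combination this

theorem Supermodular.const_sub {f : Finset α → R} (hf : Supermodular f) (c : R) :
    Submodular fun S => c - f S := fun S S' t hS ht => by
  have := hf S S' t hS ht
  linear_combination this

theorem Supermodular.mul {f g : Finset α → R} (hf : Supermodular f) (hg : Supermodular g)
    (hf_anti : Antitone f) (hg_anti : Antitone g) (hf₀ : ∀ S, 0 ≤ f S) (hg₀ : ∀ S, 0 ≤ g S) :
    Supermodular (f * g) := by
  intro S S' t hS ht
  have product_rule : ∀ X, (f * g) (insert t X) - (f * g) X =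
      f (insert t X) * (g (insert t X) - g X) + g X * (f (insert t X) - f X) := fun X => by
    simp only [Pi.mul_apply]; ring
  have hfΔ : f (insert t S) - f S ≤ 0 := sub_nonpos.2 (hf_anti (Finset.subset_insert t S))
  have hgΔ : g (insert t S) - g S ≤ 0 := sub_nonpos.2 (hg_anti (Finset.subset_insert t S))
  rw [product_rule, product_rule]
  gcongr ?_ + ?_
  · calc f (insert t S) * (g (insert t S) - g S)
        ≤ f (insert t S') * (g (insert t S) - g S) :=
          mul_le_mul_of_nonpos_right (hf_anti (Finset.insert_subset_insert t hS)) hgΔ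
      _ ≤ f (insert t S') * (g (insert t S') - g S') :=
          mul_le_mul_of_nonneg_left (hg S S' t hS ht) (hf₀ _)
  · calc g S * (f (insert t S) - f S)
        ≤ g S' * (f (insert t S) - f S) := mul_le_mul_of_nonpos_right (hg_anti hS) hfΔ
      _ ≤ g S' * (f (insert t S') - f S') := mul_le_mul_of_nonneg_left (hf S S' t hS ht) (hg₀ _)

end SetFunction

theorem disjunction_monotone_submodular_general {T : Type*} [DecidableEq T]
    (g₁ g₂ : Finset T → ℝ)
    (hrange₁ : ∀ S : Finset T, g₁ S ∈ Set.Icc (0:ℝ) 1)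
    (hrange₂ : ∀ S : Finset T, g₂ S ∈ Set.Icc (0:ℝ) 1)
    (hmono₁ : ∀ S S' : Finset T, S ⊆ S' → g₁ S ≤ g₁ S')
    (hmono₂ : ∀ S S' : Finset T, S ⊆ S' → g₂ S ≤ g₂ S')
    (hsub₁ : ∀ (S S' : Finset T) (t : T), S ⊆ S' → t ∉ S' →
      g₁ (insert t S') - g₁ S' ≤ g₁ (insert t S) - g₁ S)
    (hsub₂ : ∀ (S S' : Finset T) (t : T), S ⊆ S' → t ∉ S' →
      g₂ (insert t S') - g₂ S' ≤ g₂ (insert t S) - g₂ S) :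
    (∀ S S' : Finset T, S ⊆ S' →
      1 - (1 - g₁ S) * (1 - g₂ S) ≤ 1 - (1 - g₁ S') * (1 - g₂ S')) ∧
    (∀ (S S' : Finset T) (t : T), S ⊆ S' → t ∉ S' →
      (1 - (1 - g₁ (insert t S')) * (1 - g₂ (insert t S')))
        - (1 - (1 - g₁ S') * (1 - g₂ S')) ≤
      (1 - (1 - g₁ (insert t S)) * (1 - g₂ (insert t S)))
        - (1 - (1 - g₁ S) * (1 - g₂ S))) := by
  have hanti₁ : Antitone fun S => 1 - g₁ S := fun S S' h => sub_le_sub_left (hmono₁ S S' h) 1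
  have hanti₂ : Antitone fun S => 1 - g₂ S := fun S S' h => sub_le_sub_left (hmono₂ S S' h) 1
  have hnonneg₁ : ∀ S, 0 ≤ 1 - g₁ S := fun S => sub_nonneg.2 (hrange₁ S).2
  have hnonneg₂ : ∀ S, 0 ≤ 1 - g₂ S := fun S => sub_nonneg.2 (hrange₂ S).2
  have hsuper : Supermodular ((fun S => 1 - g₁ S) * fun S => 1 - g₂ S) :=
    (Submodular.const_sub hsub₁ 1).mul (Submodular.const_sub hsub₂ 1) hanti₁ hanti₂
      hnonneg₁ hnonneg₂
  refine ⟨fun S S' h => ?_, hsuper.const_sub 1⟩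
  exact sub_le_sub_left (mul_le_mul (hanti₁ h) (hanti₂ h) (hnonneg₂ _) (hnonneg₁ _)) 1

theorem disjunction_monotone_submodular {T : Type*} [DecidableEq T] [Fintype T]
    (g₁ g₂ : Finset T → ℝ)
    (hrange₁ : ∀ S : Finset T, g₁ S ∈ Set.Icc (0:ℝ) 1)
    (hrange₂ : ∀ S : Finset T, g₂ S ∈ Set.Icc (0:ℝ) 1)
    (hmono₁ : ∀ S S' : Finset T, S ⊆ S' → g₁ S ≤ g₁ S')
    (hmono₂ : ∀ S S' : Finset T, S ⊆ S' → g₂ S ≤ g₂ S')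
    (hsub₁ : ∀ (S S' : Finset T) (t : T), S ⊆ S' → t ∉ S' →
      g₁ (insert t S') - g₁ S' ≤ g₁ (insert t S) - g₁ S)
    (hsub₂ : ∀ (S S' : Finset T) (t : T), S ⊆ S' → t ∉ S' →
      g₂ (insert t S') - g₂ S' ≤ g₂ (insert t S) - g₂ S) :
    (∀ S S' : Finset T, S ⊆ S' →
      1 - (1 - g₁ S) * (1 - g₂ S) ≤ 1 - (1 - g₁ S') * (1 - g₂ S')) ∧
    (∀ (S S' : Finset T) (t : T), S ⊆ S' → t ∉ S' →
      (1 - (1 - g₁ (insert t S')) * (1 - g₂ (insert t S')))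
        - (1 - (1 - g₁ S') * (1 - g₂ S')) ≤
      (1 - (1 - g₁ (insert t S)) * (1 - g₂ (insert t S)))
        - (1 - (1 - g₁ S) * (1 - g₂ S))) :=
  disjunction_monotone_submodular_general g₁ g₂ hrange₁ hrange₂ hmono₁ hmono₂ hsub₁ hsub₂
end

section
/- Let O be a finite set of objects with a probability distribution π (π(x) > 0 for all x, ∑ π(x) = 1) and a finite set T of tests, where each test t maps objects to values. For an object x_i, define N(x_i, S) ⊆ O as the set of objects agreeing with x_i on all tests in S, and define f_i(S) = (1 − π(N(x_i, S))) / (1 − π(x_i)) (assume π(x_i) < 1). Then f_i is monotone non-decreasing and submodular, with f_i(∅) = 0. -/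
/-- The set of objects agreeing with `x` on all tests in `S`. -/
def agreeSet {O T V : Type*} [Fintype O] [DecidableEq V]
    (val : T → O → V) (x : O) (S : Finset T) : Finset O :=
  Finset.univ.filter (fun y => ∀ t ∈ S, val t y = val t x)

/-- The scaled probability-exclusion function `f_i`. -/
noncomputable def probExcl {O T V : Type*} [Fintype O] [DecidableEq V]
    (π : O → ℝ) (val : T → O → V) (x : O) (S : Finset T) : ℝ :=
  (1 - ∑ y ∈ agreeSet val x S, π y) / (1 - π x)

lemma agreeSet_anti {O T V : Type*} [Fintype O] [DecidableEq V]
    (val : T → O → V) (x : O) {S S' : Finset T} (h : S ⊆ S') :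
    agreeSet val x S' ⊆ agreeSet val x S := by
  intro y hy
  simp only [agreeSet, Finset.mem_filter, Finset.mem_univ, true_and] at *
  exact fun t ht => hy t (h ht)

lemma agreeSet_insert {O T V : Type*} [Fintype O] [DecidableEq O] [DecidableEq T] [DecidableEq V]
    (val : T → O → V) (x : O) (t : T) (S : Finset T) :
    agreeSet val x (insert t S) = agreeSet val x S ∩ agreeSet val x {t} := by
  ext y
  simp only [agreeSet, Finset.mem_filter, Finset.mem_univ, true_and,
    Finset.mem_inter, Finset.mem_insert, Finset.mem_singleton]
  constructor
  · intro h
    exact ⟨fun s hs => h s (Or.inr hs), fun s hs => h s (Or.inl hs)⟩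
  · rintro ⟨h1, h2⟩ s (rfl | hs)
    · exact h2 s rfl
    · exact h1 s hs

theorem probExcl_monotone_submodular {O T V : Type*}
    [Fintype O] [DecidableEq O] [Fintype T] [DecidableEq T] [DecidableEq V]
    (π : O → ℝ) (hpos : ∀ y, 0 < π y) (hsum : ∑ y : O, π y = 1)
    (val : T → O → V) (x : O) (hx : π x < 1) :
    (∀ S S' : Finset T, S ⊆ S' → probExcl π val x S ≤ probExcl π val x S') ∧
    (∀ (S S' : Finset T) (t : T), S ⊆ S' → t ∉ S' →
      probExcl π val x (insert t S') - probExcl π val x S' ≤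
        probExcl π val x (insert t S) - probExcl π val x S) ∧
    probExcl π val x ∅ = 0 := by
  have hxpos : (0 : ℝ) < 1 - π x := by linarith
  have hsumle : ∀ {A B : Finset O}, A ⊆ B → ∑ y ∈ A, π y ≤ ∑ y ∈ B, π y := by
    intro A B h
    exact Finset.sum_le_sum_of_subset_of_nonneg h (fun y _ _ => (hpos y).le)
  refine ⟨?_, ?_, ?_⟩
  · intro S S' h
    unfold probExcl
    apply div_le_div_of_nonneg_right ?_ hxpos.le
    have := hsumle (agreeSet_anti val x h)
    linarith
  · intro S S' t hSS' htS'
    unfold probExcl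
    rw [div_sub_div_same, div_sub_div_same]
    apply div_le_div_of_nonneg_right ?_ hxpos.le
    have key : ∀ U : Finset T,
        (1 - ∑ y ∈ agreeSet val x (insert t U), π y) - (1 - ∑ y ∈ agreeSet val x U, π y)
        = ∑ y ∈ agreeSet val x U \ agreeSet val x {t}, π y := by
      intro U
      have hsub : agreeSet val x (insert t U) ⊆ agreeSet val x U :=
        agreeSet_anti val x (Finset.subset_insert t U)
      rw [agreeSet_insert]
      have := Finset.sum_sdiff_eq_sub (f := π)
        (Finset.inter_subset_left : agreeSet val x U ∩ agreeSet val x {t} ⊆ agreeSet val x U)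
      rw [Finset.sdiff_inter_self_left] at this
      linarith [this]
    rw [key S, key S']
    apply hsumle
    exact Finset.sdiff_subset_sdiff (agreeSet_anti val x hSS') le_rfl
  · unfold probExcl
    have : agreeSet val x ∅ = Finset.univ := by
      ext y; simp [agreeSet]
    rw [this, hsum]
    simp
end

section
/- Let π be a probability distribution on a finite set O of n objects with minimum probability p_min = min_x π(x) > 0. Suppose every object x_i ≠ x_j can be distinguished by some test (realizability). Define f_i and g_i as the scaled probability-exclusion and heterogeneous-pair-exclusion functions, and the disjunction F_i(S) = 1 − (1 − f_i(S))(1 − g_i(S)). Then for any i, any S ⊆ T, and any t ∈ T with F_i(S ∪ {t}) > F_i(S), the increment satisfies F_i(S ∪ {t}) − F_i(S) ≥ p_min / C(n, 2) (up to the normalization constants of f_i and g_i), i.e., the minimum positive increment of F_i is Ω(p_min / n²). -/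
/-- The number of heterogeneous (unordered) pairs in `A`. -/
def hetPairs {O C : Type*} [DecidableEq O] [DecidableEq C]
    (cls : O → C) (A : Finset O) : ℕ :=
  (A.offDiag.filter (fun p => cls p.1 ≠ cls p.2)).card / 2

/-- The scaled heterogeneous-pair-exclusion function `g_i`. -/
noncomputable def pairExcl {O T C V : Type*} [Fintype O] [DecidableEq O] [DecidableEq C]
    [DecidableEq V] (cls : O → C) (val : T → O → V) (x : O) (S : Finset T) : ℝ :=
  ((hetPairs cls (Finset.univ : Finset O) : ℝ) - (hetPairs cls (agreeSet val x S) : ℝ)) /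
    (hetPairs cls (Finset.univ : Finset O) : ℝ)

/-- The disjunction `F_i` of `f_i` and `g_i`. -/
noncomputable def disjForI {O T C V : Type*} [Fintype O] [DecidableEq O] [DecidableEq C]
    [DecidableEq V] (π : O → ℝ) (cls : O → C) (val : T → O → V) (x : O) (S : Finset T) : ℝ :=
  1 - (1 - probExcl π val x S) * (1 - pairExcl cls val x S)

theorem min_positive_increment {O T C V : Type*}
    [Fintype O] [DecidableEq O] [Nonempty O] [Fintype T] [DecidableEq T]
    [DecidableEq C] [DecidableEq V]
    (π : O → ℝ) (cls : O → C) (val : T → O → V)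
    (hpos : ∀ y, 0 < π y) (hsum : ∑ y : O, π y = 1)
    (hreal : ∀ y z : O, y ≠ z → ∃ t : T, val t y ≠ val t z)
    (hhet : 0 < hetPairs cls (Finset.univ : Finset O))
    (x : O) (hx : π x < 1) (S : Finset T) (t : T)
    (hinc : disjForI π cls val x S < disjForI π cls val x (insert t S)) :
    (Finset.univ.inf' Finset.univ_nonempty π) / ((Fintype.card O).choose 2 : ℝ) ≤
      disjForI π cls val x (insert t S) - disjForI π cls val x S := by
  classical
  set pm := Finset.univ.inf' Finset.univ_nonempty π with hpm
  have hpm_le : ∀ y, pm ≤ π y := fun y => Finset.inf'_le _ (Finset.mem_univ y)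
  have hpm_pos : 0 < pm := by
    obtain ⟨y, -, hy⟩ := Finset.exists_mem_eq_inf' Finset.univ_nonempty π
    rw [hpm, hy]; exact hpos y
  have h1x : (0:ℝ) < 1 - π x := by linarith
  -- subsets
  have hsub : agreeSet val x (insert t S) ⊆ agreeSet val x S := by
    intro y hy
    simp only [agreeSet, Finset.mem_filter, Finset.mem_univ, true_and] at hy ⊢
    exact fun s hs => hy s (Finset.mem_insert_of_mem hs)
  have hxA : ∀ S' : Finset T, x ∈ agreeSet val x S' := by
    intro S'; simp [agreeSet]
  -- abbreviations
  set P := (hetPairs cls (Finset.univ : Finset O) : ℝ) with hPdef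
  set a := ∑ y ∈ agreeSet val x S, π y with ha
  set a' := ∑ y ∈ agreeSet val x (insert t S), π y with ha'
  set b := (hetPairs cls (agreeSet val x S) : ℝ) with hb
  set b' := (hetPairs cls (agreeSet val x (insert t S)) : ℝ) with hb'
  have hP : (0:ℝ) < P := by rw [hPdef]; exact_mod_cast hhet
  -- het pairs monotone
  have hhmono : hetPairs cls (agreeSet val x (insert t S)) ≤ hetPairs cls (agreeSet val x S) :=
    Nat.div_le_div_right (Finset.card_le_card
      (Finset.filter_subset_filter _ (Finset.offDiag_mono hsub)))
  have hbb' : b' ≤ b := by rw [hb, hb']; exact_mod_cast hhmono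
  have hbP : b ≤ P := by
    rw [hb, hPdef]
    exact_mod_cast Nat.div_le_div_right (Finset.card_le_card
      (Finset.filter_subset_filter _ (Finset.offDiag_mono (Finset.subset_univ _))))
  have hb'0 : (0:ℝ) ≤ b' := by rw [hb']; positivity
  -- P ≤ choose
  have hPchoose : P ≤ ((Fintype.card O).choose 2 : ℝ) := by
    rw [hPdef]
    have h1 : hetPairs cls (Finset.univ : Finset O) ≤ (Fintype.card O).choose 2 := by
      have h2 : (Finset.univ.offDiag.filter
          (fun p : O × O => cls p.1 ≠ cls p.2)).card ≤ Fintype.card O * (Fintype.card O - 1) := by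
        calc _ ≤ (Finset.univ : Finset O).offDiag.card :=
              Finset.card_le_card (Finset.filter_subset _ _)
          _ = Fintype.card O * Fintype.card O - Fintype.card O := by
              rw [Finset.offDiag_card]; simp
          _ = Fintype.card O * (Fintype.card O - 1) := by
              rw [Nat.mul_sub_left_distrib, mul_one]
      rw [Nat.choose_two_right]
      exact Nat.div_le_div_right h2
    exact_mod_cast h1
  have hch_pos : (0:ℝ) < ((Fintype.card O).choose 2 : ℝ) := lt_of_lt_of_le hP hPchoose
  -- sum comparisons
  have haa' : a' ≤ a := by
    rw [ha, ha']
    exact Finset.sum_le_sum_of_subset_of_nonneg hsub (fun y _ _ => (hpos y).le)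
  have hxa' : π x ≤ a' := by
    rw [ha']
    exact Finset.single_le_sum (fun y _ => (hpos y).le) (hxA _)
  -- the increment identity
  have hΔ : disjForI π cls val x (insert t S) - disjForI π cls val x S
      = (b * (a - a') + (a' - π x) * (b - b')) / ((1 - π x) * P) := by
    simp only [disjForI, probExcl, pairExcl, ← ha, ← ha', ← hb, ← hb', ← hPdef]
    field_simp
    ring
  set num := b * (a - a') + (a' - π x) * (b - b') with hnumdef
  have hD : (0:ℝ) < (1 - π x) * P := mul_pos h1x hP
  have hnumpos : 0 < num := by
    have := sub_pos.mpr hinc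
    rw [hΔ] at this
    exact (div_pos_iff.mp this).resolve_right (fun h => absurd h.2 (not_lt.mpr hD.le)) |>.1
  -- b ≥ 1
  have hb1 : (1:ℝ) ≤ b := by
    by_contra h
    push_neg at h
    have hb0 : b = 0 := by
      rw [hb] at h ⊢
      exact_mod_cast Nat.lt_one_iff.mp (by exact_mod_cast h)
    have hb'0' : b' = 0 := le_antisymm (hb0 ▸ hbb') hb'0
    rw [hnumdef, hb0, hb'0'] at hnumpos
    simp at hnumpos
  -- key: num ≥ pm
  have hnum_ge : pm ≤ num := by
    rcases lt_or_eq_of_le haa' with hlt | heq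
    · -- a' < a : some object excluded
      have hne : (agreeSet val x S \ agreeSet val x (insert t S)).Nonempty := by
        rw [Finset.sdiff_nonempty]
        intro hss
        have : a ≤ a' := by
          rw [ha, ha']
          exact Finset.sum_le_sum_of_subset_of_nonneg hss (fun y _ _ => (hpos y).le)
        linarith
      obtain ⟨y, hy⟩ := hne
      have hdiff : pm ≤ a - a' := by
        have hsd : (∑ z ∈ agreeSet val x S \ agreeSet val x (insert t S), π z)
            + ∑ z ∈ agreeSet val x (insert t S), π z = ∑ z ∈ agreeSet val x S, π z :=
          Finset.sum_sdiff hsub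
        have h5 : π y ≤ ∑ z ∈ agreeSet val x S \ agreeSet val x (insert t S), π z :=
          Finset.single_le_sum (fun z _ => (hpos z).le) hy
        have h6 := hpm_le y
        rw [ha, ha']
        linarith
      nlinarith [mul_nonneg (sub_nonneg.mpr hxa') (sub_nonneg.mpr hbb')]
    · -- a' = a : pair term must be positive
      have hnum2 : num = (a' - π x) * (b - b') := by rw [hnumdef, ← heq]; ring
      rw [hnum2] at hnumpos ⊢
      have h1 : 0 < a' - π x := by
        rcases lt_or_ge (π x) a' with h | h
        · linarith
        · exfalso
          have : a' - π x = 0 := by linarith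
          rw [this] at hnumpos; simp at hnumpos
      have h2 : 0 < b - b' := by
        rcases lt_or_ge b' b with h | h
        · linarith
        · exfalso
          have h9 : (a' - π x) * (b - b') ≤ 0 :=
            mul_nonpos_of_nonneg_of_nonpos (by linarith) (by linarith)
          linarith
      have h2' : (1:ℝ) ≤ b - b' := by
        rw [hb, hb']
        have : hetPairs cls (agreeSet val x (insert t S)) < hetPairs cls (agreeSet val x S) := by
          by_contra hc
          push_neg at hc
          have : b ≤ b' := by rw [hb, hb']; exact_mod_cast hc
          linarith
        have h7 : hetPairs cls (agreeSet val x (insert t S)) + 1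
            ≤ hetPairs cls (agreeSet val x S) := this
        have h8 : b' + 1 ≤ b := by rw [hb, hb']; exact_mod_cast h7
        linarith
      have h1' : pm ≤ a' - π x := by
        have hsd : (∑ z ∈ (agreeSet val x (insert t S)).erase x, π z) + π x
            = ∑ z ∈ agreeSet val x (insert t S), π z :=
          Finset.sum_erase_add _ _ (hxA _)
        rw [ha'] at h1 ⊢
        have hne : ((agreeSet val x (insert t S)).erase x).Nonempty := by
          by_contra hc
          rw [Finset.not_nonempty_iff_eq_empty] at hc
          rw [hc, Finset.sum_empty] at hsd
          linarith
        obtain ⟨y, hy⟩ := hne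
        have h5 : π y ≤ ∑ z ∈ (agreeSet val x (insert t S)).erase x, π z :=
          Finset.single_le_sum (fun z _ => (hpos z).le) hy
        have h6 := hpm_le y
        linarith
      calc pm = pm * 1 := (mul_one pm).symm
        _ ≤ (a' - π x) * (b - b') := mul_le_mul h1' h2' zero_le_one (by linarith)
  -- finish
  rw [hΔ, div_le_div_iff₀ hch_pos hD]
  have hx0 : 0 < π x := hpos x
  have e0 : (1 - π x) * P ≤ P := by
    have h10 := mul_le_mul_of_nonneg_right (show (1:ℝ) - π x ≤ 1 by linarith) hP.le
    rw [one_mul] at h10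
    exact h10
  have e1 : pm * ((1 - π x) * P) ≤ pm * P := mul_le_mul_of_nonneg_left e0 hpm_pos.le
  have e2 : pm * P ≤ num * ((Fintype.card O).choose 2 : ℝ) :=
    mul_le_mul hnum_ge hPchoose hP.le (hpm_pos.trans_le hnum_ge).le
  linarith
end

section
/- Suppose (a_k)_{k≥0} and (b_k)_{k≥0} are sequences of non-negative reals with a_0 ≤ 1, b_0 = 1, and a_{k+1} ≤ 0.2·a_k + 3·b_{k+1} for all k ≥ 0. Let Q = α·(∑_{k≥0} 2^k a_k) + α for some α > 0 (assuming the sums converge), and let OPT ≥ (1/2)·∑_{k≥0} 2^{k−1} b_k. Then Q ≤ 20·α·OPT. -/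
theorem one_sub_mul_tsum_le_of_succ_le {f g : ℕ → ℝ} {c : ℝ} (hf : Summable f)
    (hg : Summable g) (h : ∀ k, f (k + 1) ≤ c * f k + g (k + 1)) :
    (1 - c) * ∑' k, f k ≤ f 0 + ∑' k, g k - g 0 := by
  have hf_tail : ∑' k, f (k + 1) ≤ c * ∑' k, f k + ∑' k, g (k + 1) := by
    rw [← tsum_mul_left, ← (hf.mul_left c).tsum_add ((summable_nat_add_iff 1).2 hg)]
    exact ((summable_nat_add_iff 1).2 hf).tsum_le_tsum h
      ((hf.mul_left c).add ((summable_nat_add_iff 1).2 hg))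
  linarith [hf.tsum_eq_zero_add, hg.tsum_eq_zero_add]

theorem geometric_recurrence_bound_general (a b : ℕ → ℝ) (α OPT : ℝ)
    (ha0 : a 0 ≤ 1) (hb0 : b 0 = 1)
    (hrec : ∀ k, a (k + 1) ≤ 0.2 * a k + 3 * b (k + 1))
    (hsa : Summable (fun k : ℕ => (2:ℝ) ^ k * a k))
    (hsb : Summable (fun k : ℕ => (2:ℝ) ^ k / 2 * b k))
    (hα : 0 < α)
    (hOPT : (1 / 2) * ∑' k : ℕ, (2:ℝ) ^ k / 2 * b k ≤ OPT) :
    α * (∑' k : ℕ, (2:ℝ) ^ k * a k) + α ≤ 20 * α * OPT := by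
  have hstep : ∀ k, (2:ℝ) ^ (k + 1) * a (k + 1) ≤
      0.4 * ((2:ℝ) ^ k * a k) + 6 * ((2:ℝ) ^ (k + 1) / 2 * b (k + 1)) := fun k => by
    have := mul_le_mul_of_nonneg_left (hrec k) (pow_nonneg zero_le_two k)
    rw [pow_succ]
    linarith
  have hsum := one_sub_mul_tsum_le_of_succ_le hsa (hsb.mul_left 6) hstep
  rw [tsum_mul_left] at hsum
  simp only [pow_zero, one_mul, hb0] at hsum
  -- `hsum` reads `0.6 * A ≤ a 0 + 6 * B - 3` with `B ≤ 2 * OPT`, so `A + 1 ≤ 10 * B ≤ 20 * OPT`.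
  have hA : ∑' k : ℕ, (2:ℝ) ^ k * a k + 1 ≤ 20 * OPT := by linarith
  calc α * (∑' k : ℕ, (2:ℝ) ^ k * a k) + α = α * (∑' k : ℕ, (2:ℝ) ^ k * a k + 1) := by ring
    _ ≤ α * (20 * OPT) := mul_le_mul_of_nonneg_left hA hα.le
    _ = 20 * α * OPT := by ring

theorem geometric_recurrence_bound (a b : ℕ → ℝ) (α OPT : ℝ)
    (ha : ∀ k, 0 ≤ a k) (hb : ∀ k, 0 ≤ b k)
    (ha0 : a 0 ≤ 1) (hb0 : b 0 = 1)
    (hrec : ∀ k, a (k + 1) ≤ 0.2 * a k + 3 * b (k + 1))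
    (hsa : Summable (fun k : ℕ => (2:ℝ) ^ k * a k))
    (hsb : Summable (fun k : ℕ => (2:ℝ) ^ k / 2 * b k))
    (hα : 0 < α)
    (hOPT : (1 / 2) * ∑' k : ℕ, (2:ℝ) ^ k / 2 * b k ≤ OPT) :
    α * (∑' k : ℕ, (2:ℝ) ^ k * a k) + α ≤ 20 * α * OPT :=
  geometric_recurrence_bound_general a b α OPT ha0 hb0 hrec hsa hsb hα hOPT
end
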